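/- arXiv:1003.1101 — 12 statements merged into one kernel-verified Lean document; each statement's English description precedes it below -/
import Mathlib

section
/- If v : R → M and w : R → N are strong m-valuations such that v(a)=v(b) implies w(a)=w(b) for all a,b ∈ R, then v dominates w, i.e., v(a) ≤ v(b) implies w(a) ≤ w(b) for all a,b ∈ R. -/
/-- If `v : R → M` and `w : R → N` are strong m-valuations such that `v a = v b` implies
`w a = w b`, then `v` dominates `w`: `v a ≤ v b` implies `w a ≤ w b`, where the order is
`x ≤ y ↔ x + y = y`. -/
theorem strong_mval_dominates_of_fibers {R M N : Type*} [CommSemiring R] [CommSemiring M]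
    [CommSemiring N]
    (hbipM : ∀ a b : M, a + b = a ∨ a + b = b)
    (hbipN : ∀ a b : N, a + b = a ∨ a + b = b)
    (v : R → M) (w : R → N)
    (hv0 : v 0 = 0) (hv1 : v 1 = 1)
    (hvmul : ∀ x y : R, v (x * y) = v x * v y)
    (hvadd : ∀ x y : R, v (x + y) + (v x + v y) = v x + v y)
    (hvstrong : ∀ x y : R, v x ≠ v y → v (x + y) = v x + v y)
    (hw0 : w 0 = 0) (hw1 : w 1 = 1)
    (hwmul : ∀ x y : R, w (x * y) = w x * w y)
    (hwadd : ∀ x y : R, w (x + y) + (w x + w y) = w x + w y)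
    (hwstrong : ∀ x y : R, w x ≠ w y → w (x + y) = w x + w y)
    (hfib : ∀ a b : R, v a = v b → w a = w b) :
    ∀ a b : R, v a + v b = v b → w a + w b = w b := by
  intro a b hab
  by_cases hvab : v a = v b
  · have hw : w a = w b := hfib a b hvab
    rw [hw]
    rcases hbipN (w b) (w b) with h | h <;> exact h
  · have h1 : v (a + b) = v b := by rw [hvstrong a b hvab, hab]
    have h2 : w (a + b) = w b := hfib _ _ h1
    by_cases hwab : w a = w b
    · rw [hwab]; rcases hbipN (w b) (w b) with h | h <;> exact h
    · rw [← hwstrong a b hwab, h2]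
end

section
/- If R is a supertropical semiring in which the set of tangible elements T(R) = R \ eR is closed under multiplication, then the monoid eT(R) is cancellative: for a,b,c ∈ T(R), (ea)(ec) = (eb)(ec) implies ea = eb. -/
/-- A (commutative) supertropical semiring: a semiring with ghosts
(`1 + 1 = 1 + 1 + 1 + 1` and `a + a = b + b → a + b = a + a`, so `e := 1 + 1` is a central
idempotent with ghost map `ν x = e * x`) such that every pair `(a, b)` with `e*a ≠ e*b`
is bipotent. -/
class SupertropicalSR (R : Type*) extends CommSemiring R where
  e_idem : (1 : R) + 1 = 1 + 1 + 1 + 1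
  ghost_sum : ∀ a b : R, a + a = b + b → a + b = a + a
  pair_bipotent : ∀ a b : R, (1 + 1) * a ≠ (1 + 1) * b → a + b = a ∨ a + b = b

/-- If the tangible elements (those not of the form `(1+1)*u`) of a supertropical semiring
are closed under multiplication, then the monoid `e·T(R)` is cancellative. -/
theorem supertropical_eT_cancellative {R : Type*} [SupertropicalSR R]
    (hT : ∀ x y : R, (¬∃ u : R, x = (1+1)*u) → (¬∃ u : R, y = (1+1)*u) →
      ¬∃ u : R, x * y = (1+1)*u) :
    ∀ a b c : R, (¬∃ u : R, a = (1+1)*u) → (¬∃ u : R, b = (1+1)*u) →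
      (¬∃ u : R, c = (1+1)*u) →
      ((1+1)*a) * ((1+1)*c) = ((1+1)*b) * ((1+1)*c) → (1+1)*a = (1+1)*b := by
  intro a b c ha hb hc h
  by_contra hne
  have dbl : ∀ x : R, (1+1)*x = x + x := fun x => by rw [add_mul, one_mul]
  have e2 : ((1:R)+1)*(1+1) = 1+1 := by
    have h4 : ((1:R)+1)*(1+1) = 1+1+1+1 := by ring
    rw [h4, ← SupertropicalSR.e_idem]
  have h' : ((1:R)+1)*(a*c) = (1+1)*(b*c) := by
    have h1 : ((1+1)*a) * ((1+1)*c) = (((1:R)+1)*(1+1))*(a*c) := by ring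
    have h2 : ((1+1)*b) * ((1+1)*c) = (((1:R)+1)*(1+1))*(b*c) := by ring
    rw [h1, h2, e2] at h
    exact h
  have hg : a*c + b*c = (1+1)*(a*c) := by
    have := SupertropicalSR.ghost_sum (a*c) (b*c) (by rw [← dbl (a*c), ← dbl (b*c)]; exact h')
    rw [this, dbl]
  rcases SupertropicalSR.pair_bipotent a b hne with hab | hab
  · have hac : a*c + b*c = a*c := by rw [← add_mul, hab]
    exact hT a c ha hc ⟨a*c, by rw [← hg]; exact hac.symm⟩
  · have hbc : a*c + b*c = b*c := by rw [← add_mul, hab]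
    exact hT b c hb hc ⟨a*c, by rw [← hg]; exact hbc.symm⟩
end

section
/- If φ : R → U is a supervaluation and α : U → V is a transmissive map between supertropical semirings, then α∘φ : R → V is again a supervaluation; moreover if e·φ is strong (resp. strict) then e·(α∘φ) is strong (resp. strict). -/
/-- A supervaluation `φ : R → U`: multiplicative, sends `0 ↦ 0`, `1 ↦ 1`, and
`e·φ(a+b) ≤ e·φ(a) + e·φ(b)` in the order `x ≤ y ↔ x + y = y`. -/
def IsSuperval {R U : Type*} [CommSemiring R] [CommSemiring U] (φ : R → U) : Prop :=
  φ 0 = 0 ∧ φ 1 = 1 ∧ (∀ a b : R, φ (a * b) = φ a * φ b) ∧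
  ∀ a b : R, (1+1) * φ (a+b) + ((1+1) * φ a + (1+1) * φ b)
      = (1+1) * φ a + (1+1) * φ b

/-- A transmissive map `α : U → V`: `α 0 = 0`, `α 1 = 1`, multiplicative, `α e_U = e_V`,
and additive on the ghost ideal `e_U·U`. -/
def IsTransmissive {U V : Type*} [CommSemiring U] [CommSemiring V] (α : U → V) : Prop :=
  α 0 = 0 ∧ α 1 = 1 ∧ (∀ x y : U, α (x * y) = α x * α y) ∧ α (1+1) = 1+1 ∧
  ∀ x y : U, α ((1+1) * x + (1+1) * y) = α ((1+1) * x) + α ((1+1) * y)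

/-- A strong m-valuation: `v (x+y) = v x + v y` whenever `v x ≠ v y`. -/
def IsStrongVal {R M : Type*} [CommSemiring R] [CommSemiring M] (v : R → M) : Prop :=
  ∀ x y : R, v x ≠ v y → v (x + y) = v x + v y

/-- A strict m-valuation: `v (x+y) = v x + v y` always. -/
def IsStrictVal {R M : Type*} [CommSemiring R] [CommSemiring M] (v : R → M) : Prop :=
  ∀ x y : R, v (x + y) = v x + v y

/-- If `φ : R → U` is a supervaluation and `α : U → V` a transmissive map, then
`α ∘ φ` is a supervaluation; moreover if `e·φ` is strong (resp. strict) then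
`e·(α ∘ φ)` is strong (resp. strict). -/
theorem transmissive_comp_superval {R U V : Type*} [CommSemiring R]
    [SupertropicalSR U] [SupertropicalSR V]
    (φ : R → U) (α : U → V) (hφ : IsSuperval φ) (hα : IsTransmissive α) :
    IsSuperval (fun a => α (φ a)) ∧
    (IsStrongVal (fun a => (1+1) * φ a) → IsStrongVal (fun a => (1+1) * α (φ a))) ∧
    (IsStrictVal (fun a => (1+1) * φ a) → IsStrictVal (fun a => (1+1) * α (φ a))) := by
  obtain ⟨h0, h1, hm, hs⟩ := hφ
  obtain ⟨a0, a1, am, ae, aadd⟩ := hα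
  have key : ∀ x : U, α ((1+1) * x) = (1+1) * α x := by
    intro x; rw [am, ae]
  refine ⟨⟨by simp [h0, a0], by simp [h1, a1], fun a b => by simp [hm, am], ?_⟩, ?_, ?_⟩
  · intro a b
    simp only
    rw [← key, ← key, ← key]
    calc α ((1+1) * φ (a+b)) + (α ((1+1) * φ a) + α ((1+1) * φ b))
        = α ((1+1) * φ (a+b)) + α ((1+1) * φ a + (1+1) * φ b) := by rw [aadd]
      _ = α ((1+1) * φ (a+b)) + α ((1+1) * (φ a + φ b)) := by rw [mul_add]
      _ = α ((1+1) * φ (a+b) + (1+1) * (φ a + φ b)) := (aadd _ _).symm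
      _ = α ((1+1) * φ a + (1+1) * φ b) := by rw [mul_add, hs]
      _ = α ((1+1) * φ a) + α ((1+1) * φ b) := aadd _ _
  · intro hv x y hne
    simp only at *
    have hU : (1+1) * φ x ≠ (1+1) * φ y := by
      intro h; apply hne; rw [← key, ← key, h]
    rw [← key, ← key, ← key, show (1+1) * φ (x+y) = (1+1) * φ x + (1+1) * φ y from hv x y hU,
      aadd]
  · intro hv x y
    simp only
    rw [← key, ← key, ← key, show (1+1) * φ (x+y) = (1+1) * φ x + (1+1) * φ y from hv x y,
      aadd]
end

section
/- Let α : U → V be a transmission between supertropical semirings whose ghost part γ : eU → eV is injective. Then α is a semiring homomorphism (in particular, α(x+y) = α(x)+α(y) for all x,y ∈ U). -/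
/-- A transmission between supertropical semirings whose ghost part is injective is a
semiring homomorphism; in particular it is additive. -/
theorem transmission_injective_ghost_hom {U V : Type*} [SupertropicalSR U]
    [SupertropicalSR V] (α : U → V)
    (h0 : α 0 = 0) (h1 : α 1 = 1)
    (hmul : ∀ x y : U, α (x * y) = α x * α y)
    (he : α (1+1) = 1+1)
    (hghostadd : ∀ x y : U, α ((1+1)*x + (1+1)*y) = α ((1+1)*x) + α ((1+1)*y))
    (hinj : ∀ x y : U, α ((1+1)*x) = α ((1+1)*y) → (1+1)*x = (1+1)*y) :
    ∀ x y : U, α (x + y) = α x + α y := by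
  -- key lemma for the bipotent case
  have key : ∀ a b : U, (1+1)*a ≠ (1+1)*b → a + b = a → α (a + b) = α a + α b := by
    intro a b hne hab
    have hVne : (1+1) * α a ≠ (1+1) * α b := by
      intro h
      apply hne
      apply hinj
      rw [hmul, hmul, he, h]
    -- ghost sum relation in V
    have hgU : (1+1)*a + (1+1)*b = (1+1)*a := by rw [← mul_add, hab]
    have hgV : (1+1) * α a + (1+1) * α b = (1+1) * α a := by
      have h := hghostadd a b
      rw [hgU, hmul, hmul, he] at h
      exact h.symm
    rcases SupertropicalSR.pair_bipotent (α a) (α b) hVne with h | h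
    · rw [hab, h]
    · exfalso
      apply hVne
      have : (1+1) * (α a + α b) = (1+1) * α b := by rw [h]
      rw [mul_add, hgV] at this
      exact this
  intro x y
  by_cases hxy : (1+1)*x = (1+1)*y
  · -- ghost case
    have hx2 : (1+1)*x = x + x := by ring
    have hy2 : (1+1)*y = y + y := by ring
    have hU : x + y = x + x := SupertropicalSR.ghost_sum x y (by
      rw [← hx2, ← hy2, hxy])
    have hV : α x + α y = α x + α x := SupertropicalSR.ghost_sum (α x) (α y) (by
      have h := congrArg α hxy
      rw [hmul, hmul, he] at h
      calc α x + α x = (1+1) * α x := by ring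
        _ = (1+1) * α y := h
        _ = α y + α y := by ring)
    rw [hU, hV, ← hx2, hmul, he]
    ring
  · rcases SupertropicalSR.pair_bipotent x y hxy with h | h
    · exact key x y hxy h
    · have := key y x (Ne.symm hxy) (by rw [add_comm]; exact h)
      rw [add_comm y x, add_comm (α y) (α x)] at this
      exact this
end

section
/- Let α : U → V be a transmission between supertropical semirings. If x,y ∈ U satisfy ex = ey, then α(x+y) = α(x)+α(y). Also, if α(x)+α(y) is tangible in V, then α(x+y) = α(x)+α(y). -/
/-- For a transmission `α : U → V`: if `e*x = e*y` then `α (x+y) = α x + α y`; and if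
`α x + α y` is tangible (not a ghost) then also `α (x+y) = α x + α y`. -/
theorem transmission_partial_additivity {U V : Type*} [SupertropicalSR U]
    [SupertropicalSR V] (α : U → V)
    (h0 : α 0 = 0) (h1 : α 1 = 1)
    (hmul : ∀ x y : U, α (x * y) = α x * α y)
    (he : α (1+1) = 1+1)
    (hghostadd : ∀ x y : U, α ((1+1)*x + (1+1)*y) = α ((1+1)*x) + α ((1+1)*y)) :
    (∀ x y : U, (1+1)*x = (1+1)*y → α (x + y) = α x + α y) ∧
    (∀ x y : U, (¬∃ z : V, α x + α y = (1+1)*z) → α (x + y) = α x + α y) := by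
  have emulU : ∀ a : U, (1+1)*a = a+a := fun a => by rw [add_mul, one_mul]
  have emulV : ∀ a : V, (1+1)*a = a+a := fun a => by rw [add_mul, one_mul]
  have hx' : ∀ z : U, α ((1+1)*z) = (1+1)*α z := fun z => by rw [hmul, he]
  constructor
  · intro x y hxy
    have key : (1+1) * α x = (1+1) * α y := by rw [← hx', ← hx', hxy]
    have hU : x + y = x + x :=
      SupertropicalSR.ghost_sum x y (by rw [← emulU x, ← emulU y, hxy])
    have hV : α x + α y = α x + α x :=
      SupertropicalSR.ghost_sum (α x) (α y) (by rw [← emulV (α x), ← emulV (α y), key])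
    rw [hU, ← emulU, hx', emulV, ← hV]
  · intro x y hnt
    have hne : (1+1)*α x ≠ (1+1)*α y := by
      intro h
      refine hnt ⟨α x, ?_⟩
      have h2 := SupertropicalSR.ghost_sum (α x) (α y)
        (by rw [← emulV (α x), ← emulV (α y), h])
      rw [h2, ← emulV]
    have hneU : (1+1)*x ≠ (1+1)*y := fun h => hne (by rw [← hx', ← hx', h])
    rcases SupertropicalSR.pair_bipotent x y hneU with hb | hb <;>
      rcases SupertropicalSR.pair_bipotent (α x) (α y) hne with hv | hv
    · rw [hb, hv]
    · -- x+y = x but αx+αy = αy : contradiction with hne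
      exfalso
      apply hne
      have h2 : (1+1)*x = (1+1)*x + (1+1)*y := by rw [← mul_add, hb]
      have h3 := hghostadd x y
      rw [← h2, hx', hx', ← mul_add, hv] at h3
      exact h3
    · -- x+y = y but αx+αy = αx : contradiction
      exfalso
      apply hne
      have h2 : (1+1)*y = (1+1)*x + (1+1)*y := by rw [← mul_add, hb]
      have h3 := hghostadd x y
      rw [← h2, hx', hx', ← mul_add, hv] at h3
      exact h3.symm
    · rw [hb, hv]
end

section
/- Let U be a supertropical semiring with ghost ideal M = eU and L a submonoid of (M,·) with M·(M∖L) ⊆ M∖L. Then the map α : U → U defined by α(x)=x if ex ∈ L and α(x)=ex if ex ∈ M∖L is an endomorphism of the semiring U. -/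
/-- Let `M = e·U` be the ghost ideal of a supertropical semiring `U` and `L` a
multiplicative submonoid of `M` (so `1_M = e ∈ L`) with `M·(M∖L) ⊆ M∖L`. Then the map
`α` with `α x = x` if `e*x ∈ L` and `α x = e*x` if `e*x ∉ L` is a semiring endomorphism
of `U`. -/
theorem contraction_along_submonoid_endomorphism {U : Type*} [SupertropicalSR U]
    (L : Set U)
    (hLM : L ⊆ Set.range (fun x : U => (1+1) * x))
    (hL1 : (1+1 : U) ∈ L)
    (hLmul : ∀ x ∈ L, ∀ y ∈ L, x * y ∈ L)
    (hLcompl : ∀ x ∈ Set.range (fun x : U => (1+1) * x),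
      ∀ y ∈ Set.range (fun x : U => (1+1) * x) \ L,
        x * y ∈ Set.range (fun x : U => (1+1) * x) \ L)
    (α : U → U)
    (hα : ∀ x : U, ((1+1)*x ∈ L → α x = x) ∧ ((1+1)*x ∉ L → α x = (1+1)*x)) :
    α 0 = 0 ∧ α 1 = 1 ∧
    (∀ x y : U, α (x + y) = α x + α y) ∧
    (∀ x y : U, α (x * y) = α x * α y) := by
  classical
  have hee : ((1:U)+1) * (1+1) = 1+1 := by
    calc ((1:U)+1)*(1+1) = 1+1+1+1 := by ring
    _ = 1+1 := (SupertropicalSR.e_idem (R := U)).symm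
  have hepe : ((1:U)+1) + (1+1) = 1+1 := by
    calc ((1:U)+1)+(1+1) = (1+1)*(1+1) := by ring
    _ = 1+1 := hee
  have hdup : ∀ a : U, (1+1)*a + (1+1)*a = (1+1)*a := fun a => by
    calc (1+1)*a + (1+1)*a = ((1+1)+(1+1))*a := by ring
    _ = (1+1)*a := by rw [hepe]
  have hEE : ∀ a b : U, ((1+1)*a) * ((1+1)*b) = (1+1)*(a*b) := fun a b => by
    calc ((1+1)*a) * ((1+1)*b) = ((1+1)*(1+1))*(a*b) := by ring
    _ = (1+1)*(a*b) := by rw [hee]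
  refine ⟨?_, ?_, ?_, ?_⟩
  · by_cases h0 : (1+1:U)*0 ∈ L
    · exact (hα 0).1 h0
    · rw [(hα 0).2 h0, mul_zero]
  · exact (hα 1).1 (by rwa [mul_one])
  · intro x y
    by_cases hx : (1+1)*x ∈ L <;> by_cases hy : (1+1)*y ∈ L
    · rw [(hα x).1 hx, (hα y).1 hy]
      by_cases hxy : (1+1)*x = (1+1)*y
      · refine (hα _).1 ?_
        have h : (1+1)*(x+y) = (1+1)*x := by
          calc (1+1)*(x+y) = (1+1)*x + (1+1)*y := by ring
          _ = (1+1)*x + (1+1)*x := by rw [hxy]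
          _ = (1+1)*x := hdup x
        rw [h]; exact hx
      · rcases SupertropicalSR.pair_bipotent x y hxy with h | h
        · exact (hα _).1 (by rw [h]; exact hx)
        · exact (hα _).1 (by rw [h]; exact hy)
    · rw [(hα x).1 hx, (hα y).2 hy]
      have hxy : (1+1)*x ≠ (1+1)*y := fun h => hy (h ▸ hx)
      rcases SupertropicalSR.pair_bipotent x y hxy with h | h
      · have h1 : α (x+y) = x + y := (hα _).1 (by rw [h]; exact hx)
        rw [h1, h, show x + ((1+1)*y) = (x+y)+y from by ring, h, h]
      · have h1 : α (x+y) = (1+1)*(x+y) := (hα _).2 (by rw [h]; exact hy)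
        rw [h1, h, show x + ((1+1)*y) = (x+y)+y from by ring, h]
        ring
    · rw [(hα x).2 hx, (hα y).1 hy]
      have hxy : (1+1)*x ≠ (1+1)*y := fun h => hx (h ▸ hy)
      rcases SupertropicalSR.pair_bipotent x y hxy with h | h
      · have h1 : α (x+y) = (1+1)*(x+y) := (hα _).2 (by rw [h]; exact hx)
        rw [h1, h, show ((1+1)*x) + y = (x+y)+x from by ring, h]
        ring
      · have h1 : α (x+y) = x + y := (hα _).1 (by rw [h]; exact hy)
        rw [h1, h, show ((1+1)*x) + y = (x+y)+x from by ring, h, add_comm y x, h]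
    · rw [(hα x).2 hx, (hα y).2 hy]
      by_cases hxy : (1+1)*x = (1+1)*y
      · have h : (1+1)*(x+y) = (1+1)*x := by
          calc (1+1)*(x+y) = (1+1)*x + (1+1)*y := by ring
          _ = (1+1)*x + (1+1)*x := by rw [hxy]
          _ = (1+1)*x := hdup x
        have h1 : α (x+y) = (1+1)*(x+y) := (hα _).2 (by rw [h]; exact hx)
        rw [h1]
        calc (1+1)*(x+y) = (1+1)*x := h
        _ = (1+1)*x + (1+1)*x := (hdup x).symm
        _ = (1+1)*x + (1+1)*y := by rw [hxy]
      · rcases SupertropicalSR.pair_bipotent x y hxy with h | h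
        · have h1 : α (x+y) = (1+1)*(x+y) := (hα _).2 (by rw [h]; exact hx)
          rw [h1]; ring
        · have h1 : α (x+y) = (1+1)*(x+y) := (hα _).2 (by rw [h]; exact hy)
          rw [h1]; ring
  · intro x y
    by_cases hx : (1+1)*x ∈ L <;> by_cases hy : (1+1)*y ∈ L
    · rw [(hα x).1 hx, (hα y).1 hy]
      refine (hα _).1 ?_
      have := hLmul _ hx _ hy
      rwa [hEE] at this
    · rw [(hα x).1 hx, (hα y).2 hy]
      have := hLcompl _ ⟨x, rfl⟩ _ ⟨⟨y, rfl⟩, hy⟩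
      rw [hEE] at this
      rw [(hα (x*y)).2 this.2]
      ring
    · rw [(hα x).2 hx, (hα y).1 hy]
      have := hLcompl _ ⟨y, rfl⟩ _ ⟨⟨x, rfl⟩, hx⟩
      rw [show ((1+1)*y) * ((1+1)*x) = (1+1)*(x*y) from by rw [← hEE]; ring] at this
      rw [(hα (x*y)).2 this.2]
      ring
    · rw [(hα x).2 hx, (hα y).2 hy]
      have := hLcompl _ ⟨x, rfl⟩ _ ⟨⟨y, rfl⟩, hy⟩
      rw [hEE] at this
      rw [(hα (x*y)).2 this.2, hEE]
end

section
/- If E is a fiber conserving equivalence relation on a supertropical semiring U (i.e., x₁ ∼ x₂ implies ex₁ = ex₂), then x₁ ∼ x₂ implies x₁ + y ∼ x₂ + y for all y ∈ U. -/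
/-- If `E` is a fiber conserving equivalence relation on a supertropical semiring `U`
(`x₁ ∼ x₂` implies `e*x₁ = e*x₂`), then `x₁ ∼ x₂` implies `x₁ + y ∼ x₂ + y`. -/
theorem fiber_conserving_add_compatible {U : Type*} [SupertropicalSR U]
    (E : U → U → Prop) (hE : Equivalence E)
    (hfib : ∀ x y : U, E x y → (1+1)*x = (1+1)*y) :
    ∀ x₁ x₂ y : U, E x₁ x₂ → E (x₁ + y) (x₂ + y) := by
  intro x₁ x₂ y h
  have hfx := hfib x₁ x₂ h
  have two_mul' : ∀ a : U, (1+1)*a = a + a := fun a => by ring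
  by_cases hc : (1+1)*x₁ = (1+1)*y
  · -- ghost case: x₁ + y = x₂ + y
    have hc2 : (1+1)*x₂ = (1+1)*y := hfx ▸ hc
    have h1 : x₁ + y = x₁ + x₁ := SupertropicalSR.ghost_sum x₁ y (by
      rw [← two_mul' x₁, ← two_mul' y, hc])
    have h2 : x₂ + y = x₂ + x₂ := SupertropicalSR.ghost_sum x₂ y (by
      rw [← two_mul' x₂, ← two_mul' y, hc2])
    have : x₁ + y = x₂ + y := by
      rw [h1, h2, ← two_mul' x₁, ← two_mul' x₂, hfx]
    rw [this]
    exact hE.refl _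
  · have hc2 : (1+1)*x₂ ≠ (1+1)*y := hfx ▸ hc
    rcases SupertropicalSR.pair_bipotent x₁ y hc with h1 | h1 <;>
      rcases SupertropicalSR.pair_bipotent x₂ y hc2 with h2 | h2
    · rw [h1, h2]; exact h
    · -- x₁ + y = x₁, x₂ + y = y : contradiction
      exfalso
      apply hc
      have e1 : (1+1)*x₁ = (1+1)*x₁ + (1+1)*y := by
        rw [← mul_add, h1]
      have e2 : (1+1)*y = (1+1)*x₂ + (1+1)*y := by
        rw [← mul_add, h2]
      calc (1+1)*x₁ = (1+1)*x₁ + (1+1)*y := e1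
        _ = (1+1)*x₂ + (1+1)*y := by rw [hfx]
        _ = (1+1)*y := e2.symm
    · exfalso
      apply hc
      have e1 : (1+1)*y = (1+1)*x₁ + (1+1)*y := by
        rw [← mul_add, h1]
      have e2 : (1+1)*x₂ = (1+1)*x₂ + (1+1)*y := by
        rw [← mul_add, h2]
      calc (1+1)*x₁ = (1+1)*x₂ := hfx
        _ = (1+1)*x₂ + (1+1)*y := e2
        _ = (1+1)*x₁ + (1+1)*y := by rw [hfx]
        _ = (1+1)*y := e1.symm
    · rw [h1, h2]; exact hE.refl _
end

section
/- Let E be an MFCE-relation (multiplicative and fiber conserving equivalence relation) on a supertropical semiring U. Then the quotient set U/E carries a unique semiring structure making the projection π_E : U → U/E a semiring homomorphism; U/E is supertropical, and π_E restricts to a semiring isomorphism from eU onto ē(U/E). -/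
/-- `π : U → Q` exhibits `Q` (a commutative semiring) as the quotient of the supertropical
semiring `U` by an MFCE-relation: `π` is a semiring homomorphism, `Q` is supertropical,
and `π` restricts to a semiring isomorphism from `eU` onto `ē·Q`. -/
def IsSupertropicalQuot {U Q : Type*} [SupertropicalSR U] [CommSemiring Q]
    (π : U → Q) : Prop :=
  -- π is a semiring homomorphism
  π 0 = 0 ∧ π 1 = 1 ∧
  (∀ x y : U, π (x + y) = π x + π y) ∧
  (∀ x y : U, π (x * y) = π x * π y) ∧
  -- Q is supertropical
  ((1 : Q) + 1 = 1 + 1 + 1 + 1) ∧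
  (∀ a b : Q, a + a = b + b → a + b = a + a) ∧
  (∀ a b : Q, (1+1) * a ≠ (1+1) * b → a + b = a ∨ a + b = b) ∧
  -- π restricts to an isomorphism from eU onto ē·Q
  (∀ x y : U, π ((1+1) * x) = π ((1+1) * y) → (1+1) * x = (1+1) * y) ∧
  (∀ q : Q, (∃ x : U, q = π ((1+1) * x)) ↔ (∃ p : Q, q = (1+1) * p))

section
variable {U : Type*} [SupertropicalSR U]

lemma st_two_mul (a : U) : (1+1)*a = a + a := by rw [add_mul, one_mul]

lemma st_e_sq : ((1:U)+1)*(1+1) = 1+1 := by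
  rw [mul_add, mul_one, ← add_assoc, ← SupertropicalSR.e_idem]

lemma st_add_compat (E : U → U → Prop) (hE : Equivalence E)
    (hfib : ∀ x y : U, E x y → (1+1)*x = (1+1)*y) :
    ∀ x y z : U, E x y → E (x + z) (y + z) := by
  intro x y z h
  have hexy := hfib x y h
  by_cases h' : (1+1)*x = (1+1)*z
  · have hx : x + z = x + x := SupertropicalSR.ghost_sum x z (by
      rw [← st_two_mul x, ← st_two_mul z, h'])
    have hy : y + z = y + y := SupertropicalSR.ghost_sum y z (by
      rw [← st_two_mul y, ← st_two_mul z, ← hexy, h'])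
    have : x + z = y + z := by
      rw [hx, hy, ← st_two_mul x, ← st_two_mul y, hexy]
    rw [this]; exact hE.refl _
  · have h'' : (1+1)*y ≠ (1+1)*z := by rw [← hexy]; exact h'
    rcases SupertropicalSR.pair_bipotent x z h' with hx | hx <;>
      rcases SupertropicalSR.pair_bipotent y z h'' with hy | hy
    · rw [hx, hy]; exact h
    · exfalso; apply h'
      have e1 : (1+1)*x + (1+1)*z = (1+1)*x := by rw [← mul_add, hx]
      have e2 : (1+1)*y + (1+1)*z = (1+1)*z := by rw [← mul_add, hy]
      calc (1+1)*x = (1+1)*x + (1+1)*z := e1.symm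
        _ = (1+1)*y + (1+1)*z := by rw [hexy]
        _ = (1+1)*z := e2
    · exfalso; apply h'
      have e1 : (1+1)*x + (1+1)*z = (1+1)*z := by rw [← mul_add, hx]
      have e2 : (1+1)*y + (1+1)*z = (1+1)*y := by rw [← mul_add, hy]
      calc (1+1)*x = (1+1)*y := hexy
        _ = (1+1)*y + (1+1)*z := e2.symm
        _ = (1+1)*x + (1+1)*z := by rw [hexy]
        _ = (1+1)*z := e1
    · rw [hx, hy]; exact hE.refl _

def qAdd (E : U → U → Prop) (hE : Equivalence E)
    (hfib : ∀ x y : U, E x y → (1+1)*x = (1+1)*y) :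
    Quotient (⟨E, hE⟩ : Setoid U) → Quotient (⟨E, hE⟩ : Setoid U) →
      Quotient (⟨E, hE⟩ : Setoid U) :=
  Quotient.lift₂ (fun a b => Quotient.mk _ (a + b)) (by
    intro a b c d hac hbd
    apply Quotient.sound
    refine hE.trans (st_add_compat E hE hfib a c b hac) ?_
    have h1 : E (b + c) (d + c) := st_add_compat E hE hfib b d c hbd
    rwa [add_comm b c, add_comm d c] at h1)

def qMul (E : U → U → Prop) (hE : Equivalence E)
    (hmul : ∀ x y z : U, E x y → E (x * z) (y * z)) :
    Quotient (⟨E, hE⟩ : Setoid U) → Quotient (⟨E, hE⟩ : Setoid U) →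
      Quotient (⟨E, hE⟩ : Setoid U) :=
  Quotient.lift₂ (fun a b => Quotient.mk _ (a * b)) (by
    intro a b c d hac hbd
    apply Quotient.sound
    refine hE.trans (hmul a c b hac) ?_
    have h1 : E (b * c) (d * c) := hmul b d c hbd
    rwa [mul_comm b c, mul_comm d c] at h1)

def quotCS (E : U → U → Prop) (hE : Equivalence E)
    (hmul : ∀ x y z : U, E x y → E (x * z) (y * z))
    (hfib : ∀ x y : U, E x y → (1+1)*x = (1+1)*y) :
    CommSemiring (Quotient (⟨E, hE⟩ : Setoid U)) :=
  letI : Add (Quotient (⟨E, hE⟩ : Setoid U)) := ⟨qAdd E hE hfib⟩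
  letI : Mul (Quotient (⟨E, hE⟩ : Setoid U)) := ⟨qMul E hE hmul⟩
  letI : Zero (Quotient (⟨E, hE⟩ : Setoid U)) := ⟨Quotient.mk _ 0⟩
  letI : One (Quotient (⟨E, hE⟩ : Setoid U)) := ⟨Quotient.mk _ 1⟩
  { add := (· + ·)
    mul := (· * ·)
    zero := 0
    one := 1
    nsmul := nsmulRec
    npow := npowRec
    add_assoc := fun a b c => Quotient.inductionOn₃ a b c fun x y z =>
      congrArg (Quotient.mk _) (add_assoc x y z)
    zero_add := fun a => Quotient.inductionOn a fun x => congrArg (Quotient.mk _) (zero_add x)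
    add_zero := fun a => Quotient.inductionOn a fun x => congrArg (Quotient.mk _) (add_zero x)
    add_comm := fun a b => Quotient.inductionOn₂ a b fun x y =>
      congrArg (Quotient.mk _) (add_comm x y)
    mul_assoc := fun a b c => Quotient.inductionOn₃ a b c fun x y z =>
      congrArg (Quotient.mk _) (mul_assoc x y z)
    one_mul := fun a => Quotient.inductionOn a fun x => congrArg (Quotient.mk _) (one_mul x)
    mul_one := fun a => Quotient.inductionOn a fun x => congrArg (Quotient.mk _) (mul_one x)
    mul_comm := fun a b => Quotient.inductionOn₂ a b fun x y =>
      congrArg (Quotient.mk _) (mul_comm x y)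
    left_distrib := fun a b c => Quotient.inductionOn₃ a b c fun x y z =>
      congrArg (Quotient.mk _) (left_distrib x y z)
    right_distrib := fun a b c => Quotient.inductionOn₃ a b c fun x y z =>
      congrArg (Quotient.mk _) (right_distrib x y z)
    zero_mul := fun a => Quotient.inductionOn a fun x => congrArg (Quotient.mk _) (zero_mul x)
    mul_zero := fun a => Quotient.inductionOn a fun x => congrArg (Quotient.mk _) (mul_zero x) }

end


/-- For an MFCE-relation `E` on a supertropical semiring `U`, the quotient `U/E` carries a
unique semiring structure making the projection a semiring homomorphism; the quotient is
supertropical and the projection restricts to an isomorphism `eU ≃ ē(U/E)`. -/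
theorem mfce_quotient_supertropical {U : Type*} [SupertropicalSR U]
    (E : U → U → Prop) (hE : Equivalence E)
    (hmul : ∀ x y z : U, E x y → E (x * z) (y * z))
    (hfib : ∀ x y : U, E x y → (1+1)*x = (1+1)*y) :
    let s : Setoid U := ⟨E, hE⟩
    (∃ inst : CommSemiring (Quotient s),
      @IsSupertropicalQuot U (Quotient s) _ inst (Quotient.mk s)) ∧
    -- uniqueness of the semiring structure making the projection a homomorphism
    (∀ f g : Quotient s → Quotient s → Quotient s,
      (∀ x y : U, f (Quotient.mk s x) (Quotient.mk s y) = Quotient.mk s (x + y)) →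
      (∀ x y : U, g (Quotient.mk s x) (Quotient.mk s y) = Quotient.mk s (x + y)) →
      f = g) ∧
    (∀ f g : Quotient s → Quotient s → Quotient s,
      (∀ x y : U, f (Quotient.mk s x) (Quotient.mk s y) = Quotient.mk s (x * y)) →
      (∀ x y : U, g (Quotient.mk s x) (Quotient.mk s y) = Quotient.mk s (x * y)) →
      f = g) := by
  intro s
  refine ⟨⟨quotCS E hE hmul hfib, rfl, rfl, fun x y => rfl, fun x y => rfl,
      ?_, ?_, ?_, ?_, ?_⟩, ?_, ?_⟩
  · exact congrArg (Quotient.mk s) SupertropicalSR.e_idem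
  · intro a b
    refine Quotient.inductionOn₂ a b ?_
    intro x y h
    have hE' : E (x + x) (y + y) := Quotient.exact h
    have h2 := hfib _ _ hE'
    have hx : ((1:U)+1)*(x+x) = x+x := by rw [← st_two_mul x, ← mul_assoc, st_e_sq]
    have hy : ((1:U)+1)*(y+y) = y+y := by rw [← st_two_mul y, ← mul_assoc, st_e_sq]
    have h3 : x + x = y + y := by rw [← hx, ← hy, h2]
    exact congrArg (Quotient.mk s) (SupertropicalSR.ghost_sum x y h3)
  · intro a b
    refine Quotient.inductionOn₂ a b ?_
    intro x y h
    have hne : ((1:U)+1)*x ≠ (1+1)*y := fun heq => h (by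
      show Quotient.mk s ((1+1)*x) = Quotient.mk s ((1+1)*y)
      rw [heq])
    rcases SupertropicalSR.pair_bipotent x y hne with hc | hc
    · exact Or.inl (congrArg (Quotient.mk s) hc)
    · exact Or.inr (congrArg (Quotient.mk s) hc)
  · intro x y h
    have hE' : E ((1+1)*x) ((1+1)*y) := Quotient.exact h
    have h2 := hfib _ _ hE'
    rwa [← mul_assoc, ← mul_assoc, st_e_sq] at h2
  · intro q
    constructor
    · rintro ⟨x, rfl⟩
      exact ⟨Quotient.mk s x, rfl⟩
    · rintro ⟨p, rfl⟩
      obtain ⟨x, rfl⟩ := Quotient.exists_rep p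
      exact ⟨x, rfl⟩
  · intro f g hf hg
    funext a b
    refine Quotient.inductionOn₂ a b ?_
    intro x y
    exact (hf x y).trans (hg x y).symm
  · intro f g hf hg
    funext a b
    refine Quotient.inductionOn₂ a b ?_
    intro x y
    exact (hf x y).trans (hg x y).symm
end

section
/- Let U be a supertropical semiring, G a submonoid of S(U) := {x ∈ U : x·T(U) ⊆ T(U)}, and define G' := {x ∈ S(U) : ∃g ∈ G with gx ∈ G}. Then G' is a submonoid of S(U) containing G, and the orbit equivalence relations coincide: E(G) = E(G'), where x ∼_{E(H)} y iff ∃g,h ∈ H with gx = hy. Moreover if G ⊆ S_e(U) := {g ∈ S(U) : eg = e} then G' ⊆ S_e(U). -/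
/-- Saturation of a submonoid `G` of `S(U) = {x : x·T(U) ⊆ T(U)}`: `G'` is a submonoid of
`S(U)` containing `G`, the orbit equivalence relations `E(G)` and `E(G')` coincide, and if
`G ⊆ S_e(U)` then `G' ⊆ S_e(U)`. -/
theorem saturation_submonoid_orbit_eq {U : Type*} [SupertropicalSR U]
    (hT : ∃ t : U, ¬∃ u : U, t = (1+1)*u)
    (G : Set U)
    (hGS : G ⊆ {x : U | ∀ t : U, (¬∃ u : U, t = (1+1)*u) → ¬∃ u : U, x * t = (1+1)*u})
    (hG1 : (1 : U) ∈ G)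
    (hGmul : ∀ x ∈ G, ∀ y ∈ G, x * y ∈ G) :
    let S : Set U := {x : U | ∀ t : U, (¬∃ u : U, t = (1+1)*u) → ¬∃ u : U, x * t = (1+1)*u}
    let G' : Set U := {x ∈ S | ∃ g ∈ G, g * x ∈ G}
    G ⊆ G' ∧ G' ⊆ S ∧ (1 : U) ∈ G' ∧ (∀ x ∈ G', ∀ y ∈ G', x * y ∈ G') ∧
    (∀ x y : U, (∃ g ∈ G, ∃ h ∈ G, g * x = h * y) ↔ (∃ g ∈ G', ∃ h ∈ G', g * x = h * y)) ∧
    (G ⊆ {g : U | (1+1) * g = 1+1} → G' ⊆ {g : U | (1+1) * g = 1+1}) := by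
  intro S G'
  have hGG' : G ⊆ G' := by
    intro x hx
    exact ⟨hGS hx, 1, hG1, by simpa using hx⟩
  refine ⟨hGG', fun x hx => hx.1, ⟨?_, 1, hG1, by simpa using hG1⟩, ?_, ?_, ?_⟩
  · intro t ht; simpa using ht
  · rintro x ⟨hxS, g, hg, hgx⟩ y ⟨hyS, h, hh, hhy⟩
    refine ⟨?_, g * h, hGmul g hg h hh, ?_⟩
    · intro t ht
      have := hxS (y * t) (hyS t ht)
      simpa [mul_assoc] using this
    · have := hGmul _ hgx _ hhy
      have heq : g * x * (h * y) = g * h * (x * y) := by ring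
      rwa [heq] at this
  · intro x y
    constructor
    · rintro ⟨g, hg, h, hh, he⟩
      exact ⟨g, hGG' hg, h, hGG' hh, he⟩
    · rintro ⟨g', hg', h', hh', he⟩
      obtain ⟨a, ha, hag⟩ := hg'.2
      obtain ⟨b, hb, hbh⟩ := hh'.2
      refine ⟨b * (a * g'), hGmul b hb _ hag, a * (b * h'), hGmul a ha _ hbh, ?_⟩
      calc b * (a * g') * x = b * a * (g' * x) := by ring
        _ = b * a * (h' * y) := by rw [he]
        _ = a * (b * h') * y := by ring
  · intro hGe x hx
    obtain ⟨g, hg, hgx⟩ := hx.2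
    have h1 : (1+1) * (g * x) = 1+1 := hGe hgx
    have h2 : (1+1) * g = 1+1 := hGe hg
    have : (1+1) * g * x = 1+1 := by rwa [mul_assoc]
    rw [h2] at this
    exact this
end

section
/- Let E be a multiplicative equivalence relation on a supertropical semiring U and set G_E := {x ∈ S(U) : x ∼_E 1}. Then G_E is a saturated submonoid of S(U) (i.e., G_E' = G_E), and the orbital relation E(G_E) is the coarsest orbital equivalence relation on U finer than E. -/
/-- For a multiplicative equivalence relation `E` on a supertropical semiring `U`, the set
`G_E = {x ∈ S(U) : x ∼_E 1}` is a saturated submonoid of `S(U)`, and the orbital relation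
`E(G_E)` is the coarsest orbital equivalence relation finer than `E`. -/
theorem GE_saturated_coarsest_orbital {U : Type*} [SupertropicalSR U]
    (hT : ∃ t : U, ¬∃ u : U, t = (1+1)*u)
    (E : U → U → Prop) (hE : Equivalence E)
    (hmul : ∀ x y z : U, E x y → E (x * z) (y * z)) :
    let S : Set U := {x : U | ∀ t : U, (¬∃ u : U, t = (1+1)*u) → ¬∃ u : U, x * t = (1+1)*u}
    let G : Set U := {x ∈ S | E x 1}
    -- G_E is a submonoid of S(U)
    (1 : U) ∈ G ∧ (∀ x ∈ G, ∀ y ∈ G, x * y ∈ G) ∧ G ⊆ S ∧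
    -- G_E is saturated
    ({x ∈ S | ∃ g ∈ G, g * x ∈ G} = G) ∧
    -- E(G_E) is finer than E
    (∀ x y : U, (∃ g ∈ G, ∃ h ∈ G, g * x = h * y) → E x y) ∧
    -- and is the coarsest orbital relation finer than E
    (∀ H : Set U, H ⊆ S → (1 : U) ∈ H → (∀ x ∈ H, ∀ y ∈ H, x * y ∈ H) →
      (∀ x y : U, (∃ g ∈ H, ∃ h ∈ H, g * x = h * y) → E x y) →
      ∀ x y : U, (∃ g ∈ H, ∃ h ∈ H, g * x = h * y) →
        ∃ g ∈ G, ∃ h ∈ G, g * x = h * y) := by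
  intro S G
  have hSmul : ∀ x ∈ S, ∀ y ∈ S, x * y ∈ S := by
    intro x hx y hy t ht
    have := hx (y * t) (hy t ht)
    simpa [mul_assoc] using this
  have h1S : (1 : U) ∈ S := by intro t ht; simpa using ht
  have h1G : (1 : U) ∈ G := ⟨h1S, hE.refl 1⟩
  have hGmul : ∀ x ∈ G, ∀ y ∈ G, x * y ∈ G := by
    intro x hx y hy
    refine ⟨hSmul x hx.1 y hy.1, ?_⟩
    have h1 : E (x * y) (1 * y) := hmul _ _ _ hx.2
    rw [one_mul] at h1
    exact hE.trans h1 hy.2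
  have hfiner : ∀ x y : U, (∃ g ∈ G, ∃ h ∈ G, g * x = h * y) → E x y := by
    rintro x y ⟨g, hg, h, hh, heq⟩
    have h1 : E (g * x) (1 * x) := hmul _ _ _ hg.2
    have h2 : E (h * y) (1 * y) := hmul _ _ _ hh.2
    rw [one_mul] at h1 h2
    exact hE.trans (hE.trans (hE.symm h1) (heq ▸ h2 : E (g * x) y)) (hE.refl y)
  refine ⟨h1G, hGmul, fun x hx => hx.1, ?_, hfiner, ?_⟩
  · ext x
    constructor
    · rintro ⟨hxS, g, hg, hgx⟩
      refine ⟨hxS, ?_⟩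
      have h1 : E (g * x) (1 * x) := hmul _ _ _ hg.2
      rw [one_mul] at h1
      exact hE.trans (hE.symm h1) hgx.2
    · intro hx
      exact ⟨hx.1, 1, h1G, by simpa using hx⟩
  · rintro H hHS h1H hHmul hHfine x y ⟨g, hg, h, hh, heq⟩
    have hgG : g ∈ G := ⟨hHS hg, hHfine g 1 ⟨1, h1H, g, hg, by rw [one_mul, mul_one]⟩⟩
    have hhG : h ∈ G := ⟨hHS hh, hHfine h 1 ⟨1, h1H, h, hh, by rw [one_mul, mul_one]⟩⟩
    exact ⟨g, hgG, h, hhG, heq⟩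
end

section
/- Let U be a supertropical semiring in which every tangible element is invertible. Then every MFCE-relation E on U is either equal to E(ν) (the relation x ∼ y iff ex = ey) or is orbital, i.e., E = E(H) for the subgroup H = {x ∈ T(U) : x ∼_E 1} of the unit-fiber T_e(U) = {x ∈ T(U) : ex = e}. -/
/-- If every tangible element of a supertropical semiring `U` is invertible, then every
MFCE-relation `E` on `U` is either `E(ν)` (i.e. `x ∼ y ↔ e*x = e*y`) or orbital:
`E = E(H)` for the subgroup `H = {x ∈ T(U) : x ∼_E 1}` of the unit fiber
`T_e(U) = {x ∈ T(U) : e*x = e}`. -/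
theorem mfce_on_tangible_invertible {U : Type*} [SupertropicalSR U]
    (hT : ∃ t : U, ¬∃ u : U, t = (1+1)*u)
    (hinv : ∀ x : U, (¬∃ u : U, x = (1+1)*u) → ∃ y : U, x * y = 1)
    (E : U → U → Prop) (hE : Equivalence E)
    (hmul : ∀ x y z : U, E x y → E (x * z) (y * z))
    (hfib : ∀ x y : U, E x y → (1+1)*x = (1+1)*y) :
    (∀ x y : U, E x y ↔ (1+1)*x = (1+1)*y) ∨
    (let H : Set U := {x : U | (¬∃ u : U, x = (1+1)*u) ∧ E x 1}
     -- H is a subgroup of the unit fiber T_e(U)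
     (1 : U) ∈ H ∧ (∀ x ∈ H, ∀ y ∈ H, x * y ∈ H) ∧
     (∀ x ∈ H, ∃ y ∈ H, x * y = 1) ∧
     (∀ x ∈ H, (¬∃ u : U, x = (1+1)*u) ∧ (1+1)*x = (1+1 : U)) ∧
     -- E is the orbital relation E(H)
     (∀ x y : U, E x y ↔ ∃ g ∈ H, ∃ h ∈ H, g * x = h * y)) := by
  classical
  -- e is idempotent
  have hee : ((1+1 : U)) * (1+1) = 1+1 := by
    calc ((1+1 : U)) * (1+1) = 1+1+1+1 := by ring
      _ = 1+1 := (SupertropicalSR.e_idem (R := U)).symm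
  -- 1 is tangible
  have h1t : ¬∃ u : U, (1 : U) = (1+1)*u := by
    rintro ⟨u, hu⟩
    obtain ⟨t, ht⟩ := hT
    exact ht ⟨u*t, by rw [← mul_assoc, ← hu, one_mul]⟩
  by_cases h1e : E 1 (1+1)
  · left
    intro x y
    refine ⟨hfib x y, fun hxy => ?_⟩
    have hx : E x ((1+1)*x) := by simpa using hmul 1 (1+1) x h1e
    have hy : E y ((1+1)*y) := by simpa using hmul 1 (1+1) y h1e
    exact hE.trans hx (hxy ▸ hE.symm hy)
  · right
    intro H
    have h1H : (1 : U) ∈ H := ⟨h1t, hE.refl 1⟩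
    -- products of tangibles are tangible (given one factor invertible)
    have htmul : ∀ x y : U, (¬∃ u : U, x = (1+1)*u) → (¬∃ u : U, y = (1+1)*u) →
        ¬∃ u : U, x*y = (1+1)*u := by
      intro x y hx hy
      rintro ⟨u, hu⟩
      obtain ⟨y', hy'⟩ := hinv y hy
      exact hx ⟨u*y', by calc x = x*(y*y') := by rw [hy', mul_one]
                            _ = (1+1)*(u*y') := by rw [← mul_assoc, hu]; ring⟩
    have hHmul : ∀ x ∈ H, ∀ y ∈ H, x*y ∈ H := by
      rintro x ⟨hxt, hx1⟩ y ⟨hyt, hy1⟩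
      refine ⟨htmul x y hxt hyt, ?_⟩
      have h1 : E (x*y) (1*y) := hmul x 1 y hx1
      exact hE.trans (by simpa using h1) hy1
    have hHinv : ∀ x ∈ H, ∃ y ∈ H, x*y = 1 := by
      rintro x ⟨hxt, hx1⟩
      obtain ⟨y, hy⟩ := hinv x hxt
      have hyt : ¬∃ u : U, y = (1+1)*u := by
        rintro ⟨u, hu⟩
        refine h1t ⟨x*u, ?_⟩
        have h4 : (1+1)*(x*u) = x*((1+1)*u) := by ring
        rw [h4, ← hu, hy]
      have hy1 : E y 1 := by
        have := hmul x 1 y hx1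
        rw [hy, one_mul] at this
        exact hE.symm this
      exact ⟨y, ⟨hyt, hy1⟩, hy⟩
    have hHfib : ∀ x ∈ H, (¬∃ u : U, x = (1+1)*u) ∧ (1+1)*x = (1+1 : U) := by
      rintro x ⟨hxt, hx1⟩
      exact ⟨hxt, by simpa using hfib x 1 hx1⟩
    refine ⟨h1H, hHmul, hHinv, hHfib, fun x y => ⟨fun hxy => ?_, ?_⟩⟩
    · -- forward: E x y → orbital witnesses
      -- mixed tangible/ghost is impossible
      have mixed : ∀ a b : U, E a b → (¬∃ u : U, a = (1+1)*u) → (∃ u : U, b = (1+1)*u) → False := by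
        rintro a b hab hat ⟨u, hu⟩
        obtain ⟨a', ha'⟩ := hinv a hat
        have hb : b = (1+1)*a := by
          have h1 : (1+1)*b = b := by rw [hu, ← mul_assoc, hee]
          rw [← h1, hfib a b hab]
        have h2 : E (a*a') (b*a') := hmul a b a' hab
        rw [ha'] at h2
        have h3 : b*a' = (1+1 : U) := by
          rw [hb, mul_assoc, ha', mul_one]
        rw [h3] at h2
        exact h1e h2
      by_cases hxt : ∃ u : U, x = (1+1)*u
      · by_cases hyt : ∃ u : U, y = (1+1)*u
        · -- both ghost: x = y
          obtain ⟨u, hu⟩ := hxt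
          obtain ⟨v, hv⟩ := hyt
          have hx : (1+1)*x = x := by rw [hu, ← mul_assoc, hee]
          have hy : (1+1)*y = y := by rw [hv, ← mul_assoc, hee]
          have : x = y := by rw [← hx, ← hy]; exact hfib x y hxy
          exact ⟨1, h1H, 1, h1H, by rw [this]⟩
        · exact absurd (mixed y x (hE.symm hxy) hyt hxt) (fun h => h)
      · by_cases hyt : ∃ u : U, y = (1+1)*u
        · exact absurd (mixed x y hxy hxt hyt) (fun h => h)
        · -- both tangible
          obtain ⟨x', hx'⟩ := hinv x hxt
          have hx't : ¬∃ u : U, x' = (1+1)*u := by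
            rintro ⟨u, hu⟩
            refine h1t ⟨x*u, ?_⟩
            have h4 : (1+1)*(x*u) = x*((1+1)*u) := by ring
            rw [h4, ← hu, hx']
          have hgt : ¬∃ u : U, y*x' = (1+1)*u := htmul y x' hyt hx't
          have hg1 : E (y*x') 1 := by
            have := hmul x y x' hxy
            rw [hx'] at this
            exact hE.symm this
          refine ⟨y*x', ⟨hgt, hg1⟩, 1, h1H, ?_⟩
          rw [one_mul, mul_assoc, mul_comm x' x, hx', mul_one]
    · -- backward: orbital → E
      rintro ⟨g, ⟨_, hg1⟩, h, ⟨_, hh1⟩, hgh⟩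
      have h1 : E (g*x) x := by simpa using hmul g 1 x hg1
      have h2 : E (h*y) y := by simpa using hmul h 1 y hh1
      exact hE.trans (hE.symm h1) (hgh ▸ h2)
end

section
/- Let φ : R → U be a tangibly additive supervaluation on a commutative semiring R. Then for any polynomial f = Σ_i c_i λ^i ∈ R[λ₁,…,λ_n] and any a ∈ R^n, one has Σ_i φ(c_i)φ(a)^i ⊨ φ(f(a)), where ⊨ is the ghost surpassing relation (x ⊨ y iff x = y+z for some ghost z ∈ eU). In particular, if f(a) = 0 then Σ_i φ(c_i)φ(a)^i lies in the ghost ideal eU. -/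
/-- Supertropical Kapranov lemma: if `φ : R → U` is a tangibly additive supervaluation
(`φ(a) + φ(b)` ghost-surpasses `φ(a+b)` for all `a b`), then for every polynomial
`f = Σ_i c_i λ^i ∈ R[λ₁,…,λₙ]` and every `a ∈ Rⁿ`, the element `Σ_i φ(c_i) φ(a)^i`
ghost-surpasses `φ(f(a))`. In particular, if `f(a) = 0` then `Σ_i φ(c_i) φ(a)^i` is a
ghost. -/
theorem superval_kapranov {R U : Type*} [CommSemiring R] [SupertropicalSR U]
    (φ : R → U) (h0 : φ 0 = 0) (h1 : φ 1 = 1)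
    (hmul : ∀ a b : R, φ (a * b) = φ a * φ b)
    (hadd : ∀ a b : R, (1+1) * φ (a+b) + ((1+1) * φ a + (1+1) * φ b)
              = (1+1) * φ a + (1+1) * φ b)
    (htang : ∀ a b : R, ∃ z : U, (∃ w : U, z = (1+1)*w) ∧ φ a + φ b = φ (a+b) + z)
    (n : ℕ) (f : MvPolynomial (Fin n) R) (a : Fin n → R) :
    (∃ z : U, (∃ w : U, z = (1+1)*w) ∧
      (f.support.sum fun d => φ (MvPolynomial.coeff d f) * d.prod fun j k => φ (a j) ^ k)
        = φ (MvPolynomial.eval a f) + z) ∧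
    (MvPolynomial.eval a f = 0 →
      ∃ w : U,
        (f.support.sum fun d => φ (MvPolynomial.coeff d f) * d.prod fun j k => φ (a j) ^ k)
          = (1+1)*w) := by
  -- φ as a monoid hom
  let φ' : R →* U := { toFun := φ, map_one' := h1, map_mul' := hmul }
  have hpow : ∀ (b : R) (k : ℕ), φ (b ^ k) = φ b ^ k := fun b k => map_pow φ' b k
  -- term rewrite
  have hterm : ∀ d : Fin n →₀ ℕ,
      φ (MvPolynomial.coeff d f) * d.prod (fun j k => φ (a j) ^ k)
        = φ (MvPolynomial.coeff d f * d.prod fun j k => a j ^ k) := by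
    intro d
    rw [hmul]
    congr 1
    rw [Finsupp.prod, Finsupp.prod]
    rw [show φ = ⇑φ' from rfl, map_prod]
    exact Finset.prod_congr rfl fun i _ => (map_pow φ' _ _).symm
  -- sum ghost-surpassing lemma
  have hsum : ∀ (s : Finset (Fin n →₀ ℕ)) (g : (Fin n →₀ ℕ) → R),
      ∃ z : U, (∃ w : U, z = (1+1)*w) ∧
        s.sum (fun d => φ (g d)) = φ (s.sum g) + z := by
    intro s g
    induction s using Finset.induction with
    | empty => exact ⟨0, ⟨0, by ring⟩, by simp [h0]⟩
    | @insert x s' hx ih =>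
      obtain ⟨z, ⟨w, hw⟩, hz⟩ := ih
      obtain ⟨z', ⟨w', hw'⟩, hz'⟩ := htang (g x) (s'.sum g)
      refine ⟨z' + z, ⟨w' + w, by rw [hw, hw']; ring⟩, ?_⟩
      rw [Finset.sum_insert hx, Finset.sum_insert hx, hz, ← add_assoc, hz']
      ring
  have key : ∃ z : U, (∃ w : U, z = (1+1)*w) ∧
      (f.support.sum fun d => φ (MvPolynomial.coeff d f) * d.prod fun j k => φ (a j) ^ k)
        = φ (MvPolynomial.eval a f) + z := by
    obtain ⟨z, hzg, hz⟩ := hsum f.support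
      (fun d => MvPolynomial.coeff d f * d.prod fun j k => a j ^ k)
    refine ⟨z, hzg, ?_⟩
    rw [MvPolynomial.eval_eq]
    simp only [Finsupp.prod] at hz ⊢
    rw [← hz]
    exact Finset.sum_congr rfl fun d _ => hterm d
  refine ⟨key, fun h0' => ?_⟩
  obtain ⟨z, ⟨w, hw⟩, hz⟩ := key
  exact ⟨w, by rw [hz, h0', h0, zero_add, hw]⟩
end
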